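/- arXiv:1511.06445 — 2 statements merged into one kernel-verified Lean document; each statement's English description precedes it below -/
import Mathlib

section
/- Let n be a natural number and let f : ℚ[x₁,…,xₙ] → ℚ[y₁,…,yₙ] be a ring homomorphism between polynomial rings over ℚ in the same number n of variables, such that the target ℚ[y₁,…,yₙ], viewed as a module over the source ℚ[x₁,…,xₙ] via f, is finitely generated (i.e. f is a finite morphism). Then f is injective. -/
/-!
An integral ring map cannot raise Krull dimension: by incomparability, contraction sends a strict
chain of primes of the target to a strict chain of primes of the source. If `f` killed some
`r ≠ 0`, it would factor through `ℚ[x₁,…,xₙ] ⧸ (r)`, whose dimension is at most `n - 1` because `r`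
is a non-zero-divisor; this contradicts `dim ℚ[y₁,…,yₙ] = n`.
-/

open scoped nonZeroDivisors

section KrullDimension

variable {R S : Type*} [CommRing R] [CommRing S]

theorem ringKrullDim_le_of_isIntegral (f : R →+* S) (hf : f.IsIntegral) :
    ringKrullDim S ≤ ringKrullDim R := by
  let _ := f.toAlgebra
  have : Algebra.IsIntegral R S := ⟨hf⟩
  exact Order.krullDim_le_of_strictMono (fun q ↦ ⟨q.asIdeal.comap f, inferInstance⟩)
    fun _ _ hpq ↦ Ideal.IsIntegral.comap_lt_comap (R := R) hpq

theorem ringKrullDim_succ_le_of_isIntegral {f : R →+* S} (hf : f.IsIntegral) {r : R}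
    (hr : r ∈ R⁰) (hfr : f r = 0) : ringKrullDim S + 1 ≤ ringKrullDim R := by
  have hker : ∀ a ∈ Ideal.span {r}, f a = 0 :=
    fun _ ha ↦ (RingHom.ker f).span_singleton_le_iff_mem.mpr hfr ha
  have hg : (Ideal.Quotient.lift _ f hker).IsIntegral :=
    .tower_top (Ideal.Quotient.mk _) _ (by rwa [Ideal.Quotient.lift_comp_mk])
  calc ringKrullDim S + 1 ≤ ringKrullDim (R ⧸ Ideal.span {r}) + 1 := by
        gcongr; exact ringKrullDim_le_of_isIntegral _ hg
    _ ≤ ringKrullDim R := ringKrullDim_quotient_succ_le_of_nonZeroDivisor hr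

theorem RingHom.IsIntegral.injective_of_ringKrullDim_le [IsDomain R] {f : R →+* S}
    (hf : f.IsIntegral) (hdim : ringKrullDim R ≤ ringKrullDim S) (hfin : ringKrullDim R ≠ ⊤) :
    Function.Injective f := by
  refine (injective_iff_map_eq_zero f).mpr fun r hfr ↦ ?_
  by_contra hr
  have hsucc := ringKrullDim_succ_le_of_isIntegral hf (mem_nonZeroDivisors_of_ne_zero hr) hfr
  have hS : ringKrullDim S ≠ ⊥ :=
    ne_bot_of_le_ne_bot (by simp) (ringKrullDim_nonneg_of_nontrivial.trans hdim)
  generalize ringKrullDim S = x at hS hsucc hdim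
  lift x to ℕ∞ using hS
  cases x using ENat.recTopCoe with
  | top => exact hfin (top_le_iff.mp hsucc)
  | coe d => exact absurd (hsucc.trans hdim) (by norm_cast; omega)

end KrullDimension

theorem MvPolynomial.ringKrullDim_ne_top_of_field (K σ : Type*) [Field K] [Finite σ] :
    ringKrullDim (MvPolynomial σ K) ≠ ⊤ := by
  rw [MvPolynomial.ringKrullDim_of_isNoetherianRing, ringKrullDim_eq_zero_of_field, zero_add]
  exact WithBot.coe_inj.not.mpr (ENat.natCast_ne_top _)

/-- A finite ring homomorphism between polynomial rings over `ℚ` on the same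
number `n` of variables is injective. -/
theorem finite_ringHom_mvPolynomial_injective (n : ℕ)
    (f : MvPolynomial (Fin n) ℚ →+* MvPolynomial (Fin n) ℚ)
    (hf : f.Finite) :
    Function.Injective f :=
  hf.to_isIntegral.injective_of_ringKrullDim_le le_rfl
    (MvPolynomial.ringKrullDim_ne_top_of_field ℚ (Fin n))
end

section
/- Let m ≥ 1 and consider the polynomial ring S = ℚ[q₁,…,q_m, r₁,…,r_m] in 2m variables. Setting q₀ = r₀ = 1 and q_j = r_j = 0 for j > m, define for each 1 ≤ i ≤ 2m the element P_i = Σ_{j+k=i} q_j · r_k ∈ S. Then the 2m elements P₁,…,P_{2m} are algebraically independent over ℚ. -/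
/-!
Substitute for `q_j` and `r_j` the elementary symmetric polynomials `e_j(x)` and `e_j(y)` in two
disjoint sets of `m` variables. Since `∏ (1 + x_a t) · ∏ (1 + y_b t) = ∏ (1 + z_c t)` with
`z = x ∪ y`, this substitution sends `P_i` to `e_i(z)`, the `i`-th elementary symmetric polynomial
in all `2m` variables. By the fundamental theorem of symmetric polynomials, `e_1(z), …, e_{2m}(z)`
are algebraically independent, and algebraic independence pulls back along an algebra map.
-/

open MvPolynomial Finset

namespace Multiset

variable {R : Type*} [CommSemiring R]

theorem esymm_cons_succ (a : R) (s : Multiset R) (n : ℕ) :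
    (a ::ₘ s).esymm (n + 1) = s.esymm (n + 1) + a * s.esymm n := by
  simp only [esymm, powersetCard_cons, map_add, sum_add, map_map, Function.comp_def, prod_cons,
    sum_map_mul_left]

theorem coeff_prod_one_add_C_mul_X (s : Multiset R) (n : ℕ) :
    (s.map fun r => 1 + Polynomial.C r * Polynomial.X).prod.coeff n = s.esymm n := by
  induction s using Multiset.induction_on generalizing n with
  | empty => cases n <;> simp [esymm, Polynomial.coeff_one, powersetCard_zero_right]
  | cons a s ih =>
    cases n with
    | zero => simp [esymm, ih 0]
    | succ n =>
      rw [map_cons, prod_cons, esymm_cons_succ, add_mul, one_mul, mul_assoc, Polynomial.coeff_add,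
        Polynomial.coeff_C_mul, Polynomial.coeff_X_mul, ih, ih]

theorem esymm_add (s t : Multiset R) (n : ℕ) :
    (s + t).esymm n =
      ∑ jk ∈ Finset.HasAntidiagonal.antidiagonal n, s.esymm jk.1 * t.esymm jk.2 := by
  simp only [← coeff_prod_one_add_C_mul_X, map_add, prod_add, Polynomial.coeff_mul]

end Multiset

namespace MvPolynomial

section CommSemiring

variable {R : Type*} [CommSemiring R]

theorem esymm_eq_zero_of_card_lt {σ : Type*} [Fintype σ] {n : ℕ} (h : Fintype.card σ < n) :
    esymm σ R n = 0 := by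
  rw [esymm, powersetCard_eq_empty.2 (by simpa using h), sum_empty]

theorem esymm_sum_type (α β : Type*) [Fintype α] [Fintype β] (n : ℕ) :
    esymm (α ⊕ β) R n = ∑ jk ∈ antidiagonal n,
      rename Sum.inl (esymm α R jk.1) * rename Sum.inr (esymm β R jk.2) := by
  have huniv : (univ : Finset (α ⊕ β)).val =
      (univ : Finset α).val.map Sum.inl + (univ : Finset β).val.map Sum.inr := by
    rw [← univ_disjSum_univ, val_disjSum]
    rfl
  simp only [rename_eq_aeval, aeval_esymm_eq_multiset_esymm]
  rw [congrFun (esymm_eq_multiset_esymm (α ⊕ β) R) n, huniv, Multiset.map_add, Multiset.map_map,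
    Multiset.map_map, Multiset.esymm_add]

theorem aeval_apply_eq_of_truncated_seq {σ S : Type*} [CommSemiring S] [Algebra R S] {m : ℕ}
    {ι : Fin m → σ} {c : ℕ → MvPolynomial σ R} {g : ℕ → S} {v : σ → S}
    (hc0 : c 0 = 1) (hcX : ∀ i : Fin m, c (i + 1) = X (ι i))
    (hc_top : ∀ j, m < j → c j = 0) (hg0 : g 0 = 1) (hv : ∀ i, v (ι i) = g (i + 1))
    (hg_top : ∀ j, m < j → g j = 0) (j : ℕ) :
    aeval v (c j) = g j := by
  rcases j with _ | i
  · rw [hc0, hg0, map_one]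
  · rcases Nat.lt_or_ge i m with him | hmi
    · rw [hcX ⟨i, him⟩, aeval_X, hv]
    · rw [hc_top _ (by omega), hg_top _ (by omega), map_zero]

end CommSemiring

theorem algebraicIndependent_esymm {R σ : Type*} [CommRing R] [Fintype σ] {n : ℕ}
    (hn : n ≤ Fintype.card σ) :
    AlgebraicIndependent R fun i : Fin n => esymm σ R (i + 1) := by
  rw [algebraicIndependent_iff_injective_aeval]
  intro p q hpq
  exact esymmAlgHom_injective R hn (Subtype.ext (by rwa [esymmAlgHom_apply, esymmAlgHom_apply]))

end MvPolynomial

/-- In `S = ℚ[q₁,…,q_m,r₁,…,r_m]`, with `q₀ = r₀ = 1` and `q_j = r_j = 0` for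
`j > m`, the elements `P_i = ∑_{j+k=i} q_j r_k` for `1 ≤ i ≤ 2m` are
algebraically independent over `ℚ`. -/
theorem algebraicIndependent_whitney_sum_classes_odd (m : ℕ)
    (q r : ℕ → MvPolynomial (Fin m ⊕ Fin m) ℚ)
    (hq0 : q 0 = 1)
    (hqX : ∀ j : ℕ, ∀ h : 1 ≤ j, ∀ h' : j ≤ m,
      q j = X (Sum.inl ⟨j - 1, by omega⟩))
    (hq_top : ∀ j : ℕ, m < j → q j = 0)
    (hr0 : r 0 = 1)
    (hrX : ∀ j : ℕ, ∀ h : 1 ≤ j, ∀ h' : j ≤ m,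
      r j = X (Sum.inr ⟨j - 1, by omega⟩))
    (hr_top : ∀ j : ℕ, m < j → r j = 0) :
    AlgebraicIndependent ℚ
      (fun i : Fin (2 * m) =>
        ∑ jk ∈ Finset.HasAntidiagonal.antidiagonal ((i : ℕ) + 1), q jk.1 * r jk.2) := by
  let φ := aeval (R := ℚ) <|
    Sum.elim (fun i : Fin m => rename Sum.inl (esymm (Fin m) ℚ (i + 1)))
      fun i : Fin m => rename Sum.inr (esymm (Fin m) ℚ (i + 1))
  have hrename_esymm_top (f : Fin m → Fin m ⊕ Fin m) (j : ℕ) (hj : m < j) :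
      rename f (esymm (Fin m) ℚ j) = 0 := by
    rw [esymm_eq_zero_of_card_lt (by simpa using hj), map_zero]
  have hq (j : ℕ) : φ (q j) = rename Sum.inl (esymm (Fin m) ℚ j) := by
    refine aeval_apply_eq_of_truncated_seq (ι := Sum.inl) hq0 (fun i => ?_) hq_top (by simp)
      (fun _ => rfl) (hrename_esymm_top _) j
    simpa using hqX (i + 1) (by omega) (by omega)
  have hr (j : ℕ) : φ (r j) = rename Sum.inr (esymm (Fin m) ℚ j) := by
    refine aeval_apply_eq_of_truncated_seq (ι := Sum.inr) hr0 (fun i => ?_) hr_top (by simp)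
      (fun _ => rfl) (hrename_esymm_top _) j
    simpa using hrX (i + 1) (by omega) (by omega)
  have hP : φ ∘ (fun i : Fin (2 * m) =>
        ∑ jk ∈ Finset.HasAntidiagonal.antidiagonal ((i : ℕ) + 1), q jk.1 * r jk.2) =
      fun i : Fin (2 * m) => esymm (Fin m ⊕ Fin m) ℚ ((i : ℕ) + 1) := by
    funext i
    simp only [Function.comp_apply, map_sum, map_mul, hq, hr, esymm_sum_type]
  exact .of_comp φ (hP ▸ algebraicIndependent_esymm (by simp [two_mul]))
end
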